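/- In Z_71, let H = {1,5,25,54,57}, and for a subset S of Z_71 let HS = {h·s mod 71 : h ∈ H, s ∈ S}. Then the pair X = H{1,2,3,6,11,14,27}, Y = H{1,2,3,9,14,18,42} is a difference family in Z_71 with parameters (71; 35, 35; 34), and X is not a difference set in Z_71 (so this Legendre difference family is of type 2). -/
import Mathlib


open Finset

/-- The number of ordered pairs `(a,b) ∈ X × X` with `a - b = s`. -/
def diffCount (X : Finset (ZMod 71)) (s : ZMod 71) : ℕ :=
  ((X ×ˢ X).filter (fun p => p.1 - p.2 = s)).card

def H : Finset (ZMod 71) := {1, 5, 25, 54, 57}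

def X : Finset (ZMod 71) := (H ×ˢ ({1, 2, 3, 6, 11, 14, 27} : Finset (ZMod 71))).image (fun p => p.1 * p.2)

def Y : Finset (ZMod 71) := (H ×ˢ ({1, 2, 3, 9, 14, 18, 42} : Finset (ZMod 71))).image (fun p => p.1 * p.2)

set_option maxHeartbeats 8000000 in
set_option maxRecDepth 100000 in
theorem stmt_18 :
    X.card = 35 ∧ Y.card = 35 ∧
    (∀ s : ZMod 71, s ≠ 0 → diffCount X s + diffCount Y s = 34) ∧
    ¬ ∃ μ : ℕ, ∀ s : ZMod 71, s ≠ 0 → diffCount X s = μ := by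
  refine ⟨by decide, by decide, by decide, ?_⟩
  rintro ⟨μ, h⟩
  have h1 := h 1 (by decide)
  have h2 := h 2 (by decide)
  have hne : diffCount X 1 ≠ diffCount X 2 := by decide
  exact hne (h1.trans h2.symm)
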